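/- Let t ≥ 4 be an integer and let S = S(t, t−1, …, 2) be the spider whose legs have orders t, t−1, …, 2, so S has n = t(t+1)/2 vertices. Then th₊(S) = t + 1 = 1 + th₊(P_n); in particular S is a super-spider. -/

import Mathlib

open SimpleGraph

/-- `v` PSD-forces `w` given blue set `B`: `v` is blue, adjacent to the white vertex `w`,
and `w` is the only white neighbor of `v` in the component of `G - B` containing `w`. -/
def psdForces {V : Type*} (G : SimpleGraph V) (B : Set V) (v w : V) : Prop :=
  v ∈ B ∧ G.Adj v w ∧ ∃ hw : w ∉ B,
    ∀ (u : V) (hu : u ∉ B), G.Adj v u →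
      (G.induce {x | x ∉ B}).Reachable ⟨u, hu⟩ ⟨w, hw⟩ → u = w

/-- One time-step of PSD forcing: all forceable white vertices become blue simultaneously. -/
def psdStep {V : Type*} (G : SimpleGraph V) (B : Set V) : Set V :=
  B ∪ {w | ∃ v, psdForces G B v w}

/-- `B` is a PSD-forcing set of `G` if iterating the PSD color change rule colors all of `V`. -/
def IsPSDForcing {V : Type*} (G : SimpleGraph V) (B : Set V) : Prop :=
  ∃ t, (psdStep G)^[t] B = Set.univ

/-- The PSD-propagation time of `B` in `G`. -/
noncomputable def psdPt {V : Type*} (G : SimpleGraph V) (B : Set V) : ℕ :=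
  sInf {t | (psdStep G)^[t] B = Set.univ}

/-- The PSD-throttling number of `G`. -/
noncomputable def psdTh {V : Type*} (G : SimpleGraph V) : ℕ :=
  sInf {k | ∃ B : Finset V, IsPSDForcing G ↑B ∧ k = B.card + psdPt G ↑B}

/-- The weighted PSD-throttling number of `(G, w)`. -/
noncomputable def psdThW {V : Type*} (G : SimpleGraph V) (w : V → ℕ) : ℕ :=
  sInf {k | ∃ B : Finset V, IsPSDForcing G ↑B ∧ k = (∑ x ∈ B, w x) + psdPt G ↑B}

/-- The spider `S(l₀, …, l_{k-1})`: a center vertex `none` adjacent to the first vertex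
of each of `k` disjoint paths, the `i`-th of order `l i`. -/
def spider (k : ℕ) (l : Fin k → ℕ) : SimpleGraph (Option ((i : Fin k) × Fin (l i))) :=
  SimpleGraph.fromRel (fun x y =>
    (∃ (i : Fin k) (j : Fin (l i)), (j : ℕ) = 0 ∧ x = none ∧ y = some ⟨i, j⟩) ∨
    (∃ (i : Fin k) (j j' : Fin (l i)), (j' : ℕ) = (j : ℕ) + 1 ∧
      x = some ⟨i, j⟩ ∧ y = some ⟨i, j'⟩))

/-- The balanced spider `T_{α,β}` with `α` legs each of order `β`. -/
abbrev balancedSpider (α β : ℕ) : SimpleGraph (Option ((_ : Fin α) × Fin β)) :=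
  spider α (fun _ => β)

/-!
Spiders are trees, and in a tree two neighbours of a blue vertex never share a component of
the white subgraph, so PSD forcing simply grows the blue set by its neighbourhood at every step.
Hence `B` forces in time `p` exactly when every vertex is within distance `p` of `B`, and
`th₊` becomes a covering problem: minimize `|B| + p` over sets `B` whose `p`-balls cover.

For the path on `t(t+1)/2` vertices a ball has at most `2p + 1` vertices, which forces
`|B| + p ≥ t`, and blocks of `2p + 1` consecutive vertices attain it. In `S(t, …, 2)` the
center and the tip of the longest leg cover with `p = t - 1`. Conversely, for `2 ≤ p < t`
the tips of the `t - p` legs longer than `p` can only be covered from inside their own legs,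
and the leg of order `p` needs one more blue vertex, in that leg or at the center; for `p = 1`
the longest leg needs two blue vertices, and for `p = 0` every vertex is blue. In all cases
`|B| + p ≥ t + 1`.
-/

section PSDForcing

variable {V : Type*} (G : SimpleGraph V)

/-- Witnesses that distinct neighbours of `v` lie in distinct components of `G - v`. -/
def IsBranchLabeling {α : Type*} (v : V) (f : V → α) : Prop :=
  (∀ x y, G.Adj x y → x ≠ v → y ≠ v → f x = f y) ∧ Set.InjOn f (G.neighborSet v)

/-- The fields characterize `d z x` as the graph distance from `z` to `x`. -/
structure IsGraphMetric (d : V → V → ℕ) : Prop where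
  eq_zero_iff : ∀ x y, d x y = 0 ↔ x = y
  le_add_one_of_adj : ∀ x y z, G.Adj x y → d z x ≤ d z y + 1
  exists_adj_add_one_eq : ∀ x z, 0 < d z x → ∃ y, G.Adj x y ∧ d z y + 1 = d z x

def Covers (d : V → V → ℕ) (B : Finset V) (p : ℕ) : Prop :=
  ∀ x, ∃ b ∈ B, d b x ≤ p

variable {G}

lemma IsBranchLabeling.eq_of_reachable {α : Type*} {v : V} {f : V → α}
    (hf : IsBranchLabeling G v f) {s : Set V} (hv : v ∉ s) {a b : s}
    (h : (G.induce s).Reachable a b) : f a = f b := by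
  obtain ⟨p⟩ := h
  induction p with
  | nil => rfl
  | cons hadj _ ih =>
    exact (hf.1 _ _ hadj (ne_of_mem_of_not_mem (Subtype.prop _) hv)
      (ne_of_mem_of_not_mem (Subtype.prop _) hv)).trans ih

lemma psdStep_eq_of_isBranchLabeling {α : Type*} (f : V → V → α)
    (hf : ∀ v, IsBranchLabeling G v (f v)) (B : Set V) :
    psdStep G B = B ∪ {w | ∃ v ∈ B, G.Adj v w} := by
  refine Set.Subset.antisymm ?_ ?_
  · rintro w (hw | ⟨v, hv, hvw, -⟩)
    exacts [Or.inl hw, Or.inr ⟨v, hv, hvw⟩]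
  · rintro w (hw | ⟨v, hv, hvw⟩)
    · exact Or.inl hw
    by_cases hwB : w ∈ B
    · exact Or.inl hwB
    refine Or.inr ⟨v, hv, hvw, hwB, fun u hu hvu hreach => ?_⟩
    exact (hf v).2 hvu hvw ((hf v).eq_of_reachable (s := {x | x ∉ B}) (not_not.2 hv) hreach)

variable {d : V → V → ℕ}

lemma iterate_psdStep_eq_ball {α : Type*} (hd : IsGraphMetric G d) (f : V → V → α)
    (hf : ∀ v, IsBranchLabeling G v (f v)) (B : Set V) (s : ℕ) :
    (psdStep G)^[s] B = {x | ∃ b ∈ B, d b x ≤ s} := by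
  induction s with
  | zero =>
    ext x
    simp [hd.eq_zero_iff]
  | succ s ih =>
    rw [Function.iterate_succ_apply', ih, psdStep_eq_of_isBranchLabeling f hf]
    ext x
    simp only [Set.mem_union, Set.mem_ofPred_eq]
    constructor
    · rintro (⟨b, hb, hbx⟩ | ⟨v, ⟨b, hb, hbv⟩, hvx⟩)
      · exact ⟨b, hb, by omega⟩
      · exact ⟨b, hb, (hd.le_add_one_of_adj x v b hvx.symm).trans (by omega)⟩
    · rintro ⟨b, hb, hbx⟩
      rcases Nat.lt_or_ge (d b x) (s + 1) with h | h
      · exact Or.inl ⟨b, hb, by omega⟩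
      · obtain ⟨y, hxy, hy⟩ := hd.exists_adj_add_one_eq x b (by omega)
        exact Or.inr ⟨y, ⟨b, hb, by omega⟩, hxy.symm⟩

lemma psdTh_eq_of_isGraphMetric {α : Type*} (hd : IsGraphMetric G d) (f : V → V → α)
    (hf : ∀ v, IsBranchLabeling G v (f v)) (m : ℕ)
    (hub : ∃ (B : Finset V) (p : ℕ), Covers d B p ∧ B.card + p ≤ m)
    (hlb : ∀ (B : Finset V) (p : ℕ), Covers d B p → m ≤ B.card + p) :
    psdTh G = m := by
  have iterate_eq_univ (B : Finset V) (p : ℕ) :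
      (psdStep G)^[p] B = Set.univ ↔ Covers d B p := by
    simp [iterate_psdStep_eq_ball hd f hf, Set.eq_univ_iff_forall, Covers]
  obtain ⟨B₀, p₀, hB₀, hle⟩ := hub
  have hforce₀ : IsPSDForcing G B₀ := ⟨p₀, (iterate_eq_univ B₀ p₀).2 hB₀⟩
  refine le_antisymm ?_ ?_
  · calc psdTh G ≤ B₀.card + psdPt G B₀ := Nat.sInf_le ⟨B₀, hforce₀, rfl⟩
      _ ≤ B₀.card + p₀ := by
        gcongr; exact Nat.sInf_le ((iterate_eq_univ B₀ p₀).2 hB₀)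
      _ ≤ m := hle
  · refine le_csInf ⟨_, B₀, hforce₀, rfl⟩ ?_
    rintro k ⟨B, hB, rfl⟩
    exact hlb B _ ((iterate_eq_univ B _).1 (Nat.sInf_mem hB))

lemma Covers.le_card {B : Finset V} {p : ℕ} (hB : Covers d B p) (φ : V → ℕ) (m : ℕ)
    (h : ∀ r < m, ∃ x, ∀ b, d b x ≤ p → φ b = r) : m ≤ B.card := by
  calc m = (Finset.range m).card := (Finset.card_range m).symm
    _ ≤ (B.image φ).card := Finset.card_le_card fun r hr => by
        obtain ⟨x, hx⟩ := h r (Finset.mem_range.1 hr)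
        obtain ⟨b, hb, hbx⟩ := hB x
        exact Finset.mem_image.2 ⟨b, hb, hx b hbx⟩
    _ ≤ B.card := Finset.card_image_le

end PSDForcing

section Spider

variable {k : ℕ} {l : Fin k → ℕ}

def spiderLeg : Option ((i : Fin k) × Fin (l i)) → Option (Fin k) := Option.map Sigma.fst

def spiderDepth : Option ((i : Fin k) × Fin (l i)) → ℕ
  | none => 0
  | some s => s.2 + 1

/-- Distance in the spider: along a leg, the difference of depths; otherwise, through the
center. -/
def spiderDist (x y : Option ((i : Fin k) × Fin (l i))) : ℕ :=
  if spiderLeg x = spiderLeg y then Nat.dist (spiderDepth x) (spiderDepth y)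
  else spiderDepth x + spiderDepth y

lemma spiderDist_some_some {i i' : Fin k} (j : Fin (l i)) (j' : Fin (l i')) :
    spiderDist (some ⟨i, j⟩) (some ⟨i', j'⟩) =
      if i = i' then Nat.dist j j' else j + j' + 2 := by
  simp only [spiderDist, spiderLeg, spiderDepth, Option.map_some, Option.some.injEq, Nat.dist]
  split_ifs <;> omega

lemma spiderDist_eq_zero_iff (x y : Option ((i : Fin k) × Fin (l i))) :
    spiderDist x y = 0 ↔ x = y := by
  rcases x with _ | ⟨i, j⟩ <;> rcases y with _ | ⟨i', j'⟩
  · simp [spiderDist]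
  · simp [spiderDist, spiderLeg, spiderDepth]
  · simp [spiderDist, spiderLeg, spiderDepth]
  · rw [spiderDist_some_some]
    obtain rfl | hi := eq_or_ne i i'
    · simp [Nat.dist, Fin.ext_iff]; omega
    · simp [hi]

lemma spiderDist_comm (x y : Option ((i : Fin k) × Fin (l i))) :
    spiderDist x y = spiderDist y x := by
  simp only [spiderDist, eq_comm (a := spiderLeg x), Nat.dist_comm, add_comm]

lemma spiderDist_triangle (x y z : Option ((i : Fin k) × Fin (l i))) :
    spiderDist x z ≤ spiderDist x y + spiderDist y z := by
  unfold spiderDist Nat.dist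
  split_ifs <;> first | omega | simp_all

lemma spider_adj_iff {x y : Option ((i : Fin k) × Fin (l i))} :
    (spider k l).Adj x y ↔ spiderDist x y = 1 := by
  constructor
  · rintro ⟨-, (⟨i, j, hj, rfl, rfl⟩ | ⟨i, j, j', hj, rfl, rfl⟩) |
      (⟨i, j, hj, rfl, rfl⟩ | ⟨i, j, j', hj, rfl, rfl⟩)⟩ <;>
      simp [spiderDist, spiderLeg, spiderDepth, Nat.dist] <;> omega
  · intro h
    rcases x with _ | ⟨i, j⟩ <;> rcases y with _ | ⟨i', j'⟩
    · simp [spiderDist] at h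
    · have hj : (j' : ℕ) = 0 := by simpa [spiderDist, spiderLeg, spiderDepth] using h
      exact ⟨by simp, Or.inl (Or.inl ⟨i', j', hj, rfl, rfl⟩)⟩
    · have hj : (j : ℕ) = 0 := by simpa [spiderDist, spiderLeg, spiderDepth] using h
      exact ⟨by simp, Or.inr (Or.inl ⟨i, j, hj, rfl, rfl⟩)⟩
    · rw [spiderDist_some_some] at h
      obtain rfl | hi := eq_or_ne i i'
      · simp only [if_true, Nat.dist] at h
        refine ⟨by simp [Fin.ext_iff]; omega, ?_⟩
        rcases Nat.lt_or_gt_of_ne (show (j : ℕ) ≠ j' by omega) with hlt | hlt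
        · exact Or.inl (Or.inr ⟨i, j, j', by omega, rfl, rfl⟩)
        · exact Or.inr (Or.inr ⟨i, j', j, by omega, rfl, rfl⟩)
      · simp [hi] at h

lemma spiderDist_exists_step (x z : Option ((i : Fin k) × Fin (l i)))
    (h : 0 < spiderDist z x) :
    ∃ y, spiderDist x y = 1 ∧ spiderDist z y + 1 = spiderDist z x := by
  rcases x with _ | ⟨i, j⟩
  · rcases z with _ | ⟨a, b⟩
    · simp [spiderDist] at h
    · refine ⟨some ⟨a, ⟨0, b.pos⟩⟩, ?_, ?_⟩ <;>
        simp [spiderDist, spiderLeg, spiderDepth, Nat.dist]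
  by_cases hz : ∃ b : Fin (l i), (j : ℕ) < b ∧ z = some ⟨i, b⟩
  · obtain ⟨b, hb, rfl⟩ := hz
    exact ⟨some ⟨i, ⟨j + 1, by omega⟩⟩, by simp [spiderDist_some_some, Nat.dist],
      by simp [spiderDist_some_some, Nat.dist]; omega⟩
  -- `z` is not deeper than `x` on its leg, so the step goes towards the center
  rcases Nat.eq_zero_or_pos (j : ℕ) with hj | hj
  · refine ⟨none, by simp [spiderDist, spiderLeg, spiderDepth, hj], ?_⟩
    rcases z with _ | ⟨a, b⟩
    · simp [spiderDist, spiderLeg, spiderDepth, hj]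
    obtain rfl | ha := eq_or_ne a i
    · have := not_lt.1 fun hlt => hz ⟨b, hlt, rfl⟩
      simp [spiderDist_some_some, Nat.dist] at h ⊢; omega
    · simp [spiderDist, spiderLeg, spiderDepth, ha]; omega
  · refine ⟨some ⟨i, ⟨j - 1, by omega⟩⟩,
      by simp [spiderDist_some_some, Nat.dist]; omega, ?_⟩
    rcases z with _ | ⟨a, b⟩
    · simp [spiderDist, spiderLeg, spiderDepth]; omega
    obtain rfl | ha := eq_or_ne a i
    · have := not_lt.1 fun hlt => hz ⟨b, hlt, rfl⟩
      simp [spiderDist_some_some, Nat.dist] at h ⊢; omega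
    · simp [spiderDist_some_some, ha]; omega

lemma isGraphMetric_spiderDist : IsGraphMetric (spider k l) spiderDist where
  eq_zero_iff := spiderDist_eq_zero_iff
  le_add_one_of_adj x y z h := by
    rw [spider_adj_iff, spiderDist_comm] at h
    exact h ▸ spiderDist_triangle z y x
  exists_adj_add_one_eq x z h := by
    simpa only [spider_adj_iff] using spiderDist_exists_step x z h

lemma eq_iff_spiderLeg_eq_and_spiderDepth_eq {x y : Option ((i : Fin k) × Fin (l i))} :
    x = y ↔ spiderLeg x = spiderLeg y ∧ spiderDepth x = spiderDepth y := by
  rw [← spiderDist_eq_zero_iff]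
  unfold spiderDist Nat.dist
  split_ifs with h
  · simp only [h, true_and]; omega
  · simp only [h, false_and, iff_false]
    rcases x with _ | _ <;> rcases y with _ | _ <;> simp_all [spiderDepth]

lemma spiderLeg_eq_none_iff {x : Option ((i : Fin k) × Fin (l i))} :
    spiderLeg x = none ↔ spiderDepth x = 0 := by
  rcases x with _ | _ <;> simp [spiderLeg, spiderDepth]

/-- The leg of `x` if `x` lies beyond `v` on it (on any leg when `v` is the center), and `none`
for the component of `spider k l - v` containing the center. -/
def spiderBranch (v x : Option ((i : Fin k) × Fin (l i))) : Option (Fin k) :=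
  if spiderDepth v < spiderDepth x ∧ (spiderLeg v = none ∨ spiderLeg x = spiderLeg v) then
    spiderLeg x
  else none

lemma isBranchLabeling_spiderBranch (v : Option ((i : Fin k) × Fin (l i))) :
    IsBranchLabeling (spider k l) v (spiderBranch v) := by
  refine ⟨fun x y hxy hxv hyv => ?_, fun x hx y hy hxy => ?_⟩
  -- A vertex is determined by its leg and depth, so the claim is arithmetic in six values.
  all_goals
    simp only [SimpleGraph.mem_neighborSet, spider_adj_iff, Ne,
      eq_iff_spiderLeg_eq_and_spiderDepth_eq] at *
    unfold spiderBranch spiderDist Nat.dist at *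
    have := spiderLeg_eq_none_iff (x := x)
    have := spiderLeg_eq_none_iff (x := y)
    have := spiderLeg_eq_none_iff (x := v)
    generalize spiderLeg x = a, spiderLeg y = b, spiderLeg v = c at *
    generalize spiderDepth x = dx, spiderDepth y = dy, spiderDepth v = dv at *
    grind

end Spider

section Staircase

/-- The vertices of `S(t, t - 1, …, 2)`. -/
abbrev StaircaseVertex (t : ℕ) := Option ((i : Fin (t - 1)) × Fin (t - (i : ℕ)))

variable {t : ℕ} {B : Finset (StaircaseVertex t)}

lemma staircase_card_of_covers_zero (ht : 2 ≤ t) (hB : Covers spiderDist B 0) :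
    t + 1 ≤ B.card := by
  let φ : StaircaseVertex t → ℕ := fun x => x.elim t fun s => s.2
  refine hB.le_card φ (t + 1) fun r hr => ?_
  have hx : ∃ x, φ x = r := by
    by_cases hrt : r < t
    · exact ⟨some ⟨⟨0, by omega⟩, ⟨r, by simpa using hrt⟩⟩, rfl⟩
    · exact ⟨none, by simp [φ]; omega⟩
  obtain ⟨x, rfl⟩ := hx
  exact ⟨x, fun b hb => by rw [(spiderDist_eq_zero_iff b x).1 (Nat.le_zero.1 hb)]⟩

/-- The tip of every leg needs a blue vertex on that leg, and vertex `t - 4` of leg `0` needs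
a blue vertex other than the one near the tip of leg `0`; `φ` gives that one the label `t - 1`. -/
lemma staircase_card_of_covers_one (ht : 4 ≤ t) (hB : Covers spiderDist B 1) :
    t ≤ B.card := by
  let φ : StaircaseVertex t → ℕ := fun x =>
    x.elim (t - 1) fun s => if (s.1 : ℕ) = 0 ∧ s.2 + 2 < t then t - 1 else s.1
  refine hB.le_card φ t fun r hr => ?_
  by_cases hrt : r < t - 1
  · refine ⟨some ⟨⟨r, hrt⟩, ⟨t - r - 1, by simp; omega⟩⟩, ?_⟩
    rintro (_ | ⟨⟨i, hi⟩, j⟩) hb <;>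
      simp [φ, spiderDist, spiderLeg, spiderDepth, Nat.dist] at hb ⊢ <;> grind
  · refine ⟨some ⟨⟨0, by omega⟩, ⟨t - 4, by simp; omega⟩⟩, ?_⟩
    rintro (_ | ⟨⟨i, hi⟩, j⟩) hb <;>
      simp [φ, spiderDist, spiderLeg, spiderDepth, Nat.dist] at hb ⊢ <;> grind

/-- The witnesses are the tips of the legs `0, …, t - p`; the center is labelled with the leg
`t - p` of order `p`, whose tip it covers. -/
lemma staircase_card_of_covers {p : ℕ} (hp : 2 ≤ p) (hpt : p < t)
    (hB : Covers spiderDist B p) : t - p + 1 ≤ B.card := by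
  let φ : StaircaseVertex t → ℕ := fun x => x.elim (t - p) fun s => s.1
  refine hB.le_card φ (t - p + 1) fun r hr => ?_
  refine ⟨some ⟨⟨r, by omega⟩, ⟨t - r - 1, by simp; omega⟩⟩, ?_⟩
  rintro (_ | ⟨⟨i, hi⟩, j⟩) hb <;>
    simp [φ, spiderDist, spiderLeg, spiderDepth, Nat.dist] at hb ⊢ <;> grind

lemma staircase_card_add_ge_of_covers (ht : 4 ≤ t) {p : ℕ} (hB : Covers spiderDist B p) :
    t + 1 ≤ B.card + p := by
  rcases Nat.lt_or_ge p t with hpt | hpt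
  · match p, hB with
    | 0, hB => exact staircase_card_of_covers_zero (by omega) hB
    | 1, hB => have := staircase_card_of_covers_one ht hB; omega
    | p + 2, hB => have := staircase_card_of_covers (by omega) hpt hB; omega
  · obtain ⟨b, hb, -⟩ := hB none
    have := Finset.card_pos.2 ⟨b, hb⟩
    omega

lemma staircase_covers_center_tip (ht : 2 ≤ t) :
    Covers spiderDist ({none, some ⟨⟨0, by omega⟩, ⟨t - 1, by simp; omega⟩⟩} :
      Finset (StaircaseVertex t)) (t - 1) := by
  rintro (_ | ⟨⟨i, hi⟩, ⟨j, hj⟩⟩)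
  · exact ⟨none, by simp, by simp [spiderDist]⟩
  obtain rfl | hi0 := eq_or_ne i 0
  · refine ⟨some ⟨⟨0, hi⟩, ⟨t - 1, by simp; omega⟩⟩, by simp, ?_⟩
    simp [spiderDist_some_some, Nat.dist] at hj ⊢
    omega
  · exact ⟨none, by simp, by simp [spiderDist, spiderLeg, spiderDepth] at hj ⊢; omega⟩

theorem psdTh_staircase (ht : 4 ≤ t) :
    psdTh (spider (t - 1) (fun i => t - (i : ℕ))) = t + 1 :=
  psdTh_eq_of_isGraphMetric isGraphMetric_spiderDist spiderBranch
    isBranchLabeling_spiderBranch (t + 1)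
    ⟨_, t - 1, staircase_covers_center_tip (by omega), by
      rw [Finset.card_pair (by simp)]; omega⟩
    fun _ _ hB => staircase_card_add_ge_of_covers ht hB

end Staircase

section PathGraph

variable {n : ℕ}

lemma isGraphMetric_pathGraph :
    IsGraphMetric (pathGraph n) fun x y => Nat.dist x y where
  eq_zero_iff x y := by simp only [Nat.dist, Fin.ext_iff]; omega
  le_add_one_of_adj x y z h := by rw [pathGraph_adj] at h; simp only [Nat.dist]; omega
  exists_adj_add_one_eq x z h := by
    simp only [Nat.dist] at h ⊢
    rcases Nat.lt_or_gt_of_ne (show (x : ℕ) ≠ z by omega) with hlt | hlt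
    · exact ⟨⟨x + 1, by omega⟩, pathGraph_adj.2 (Or.inl rfl), by simp; omega⟩
    · exact ⟨⟨x - 1, by omega⟩, pathGraph_adj.2 (Or.inr (by simp; omega)), by simp; omega⟩

lemma isBranchLabeling_pathGraph (v : Fin n) :
    IsBranchLabeling (pathGraph n) v fun x => decide (x < v) := by
  refine ⟨fun x y hxy hxv hyv => ?_, fun x hx y hy hxy => ?_⟩
  · rw [pathGraph_adj] at hxy
    rw [Ne, Fin.ext_iff] at hxv hyv
    simp only [decide_eq_decide, Fin.lt_def]
    omega
  · rw [SimpleGraph.mem_neighborSet, pathGraph_adj] at hx hy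
    simp only [decide_eq_decide, Fin.lt_def] at hxy
    rw [Fin.ext_iff]
    omega

lemma card_le_mul_of_covers_pathGraph {B : Finset (Fin n)} {p : ℕ}
    (hB : Covers (fun x y : Fin n => Nat.dist x y) B p) : n ≤ B.card * (2 * p + 1) := by
  have ball_card (b : Fin n) :
      (Finset.univ.filter fun x : Fin n => Nat.dist b x ≤ p).card ≤ 2 * p + 1 :=
    calc _ ≤ (Finset.Icc ((b : ℕ) - p) (b + p)).card :=
          Finset.card_le_card_of_injOn Fin.val
            (fun x hx => by
              have hx : Nat.dist b x ≤ p := (Finset.mem_filter.1 hx).2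
              simp only [Nat.dist] at hx
              simp only [Finset.coe_Icc, Set.mem_Icc]
              omega)
            Fin.val_injective.injOn
      _ ≤ 2 * p + 1 := by simp; omega
  calc n = (Finset.univ : Finset (Fin n)).card := by simp
    _ ≤ (B.biUnion fun b => Finset.univ.filter fun x : Fin n => Nat.dist b x ≤ p).card :=
        Finset.card_le_card fun x _ => by
          obtain ⟨b, hb, hbx⟩ := hB x
          exact Finset.mem_biUnion.2 ⟨b, hb, by simpa using hbx⟩
    _ ≤ B.card * (2 * p + 1) := Finset.card_biUnion_le_card_mul _ _ _ fun b _ => ball_card b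

/-- Blocks of `2p + 1` consecutive vertices, each covered from its middle vertex (clamped to the
last vertex for a final partial block). -/
lemma exists_covers_pathGraph {b p : ℕ} (h : n ≤ b * (2 * p + 1)) :
    ∃ B : Finset (Fin n), B.card ≤ b ∧ Covers (fun x y : Fin n => Nat.dist x y) B p := by
  rcases n with _ | m
  · exact ⟨∅, by simp, fun x => x.elim0⟩
  set q := 2 * p + 1
  let center (a : ℕ) : Fin (m + 1) := ⟨min (q * a + p) m, by omega⟩
  refine ⟨(Finset.range b).image center, Finset.card_image_le.trans (by simp), fun x => ?_⟩
  have hdiv := Nat.div_add_mod (x : ℕ) q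
  have hmod := Nat.mod_lt (x : ℕ) (show 0 < q by omega)
  have hlt : (x : ℕ) / q < b := Nat.div_lt_of_lt_mul (by rw [mul_comm]; omega)
  refine ⟨center (x / q), Finset.mem_image_of_mem _ (Finset.mem_range.2 hlt), ?_⟩
  simp only [center, Nat.dist]
  omega

lemma le_add_of_triangular_le_mul {t c p : ℕ} (h : t * (t + 1) ≤ 2 * (c * (2 * p + 1))) :
    t ≤ c + p := by
  by_contra! hlt
  obtain ⟨s, rfl⟩ := Nat.exists_eq_add_of_lt hlt
  zify at h
  nlinarith [sq_nonneg ((c : ℤ) - p)]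

lemma triangular_le_mul (t : ℕ) : t * (t + 1) ≤ 2 * ((t + 1) / 2 * (2 * (t / 2) + 1)) := by
  obtain ⟨m, rfl | rfl⟩ := Nat.even_or_odd' t
  · rw [show (2 * m + 1) / 2 = m by omega, show 2 * m / 2 = m by omega]
    ring_nf; omega
  · rw [show (2 * m + 1 + 1) / 2 = m + 1 by omega, show (2 * m + 1) / 2 = m by omega]
    ring_nf; omega

theorem psdTh_pathGraph_triangular (t : ℕ) : psdTh (pathGraph (t * (t + 1) / 2)) = t := by
  have htri : 2 * (t * (t + 1) / 2) = t * (t + 1) :=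
    Nat.mul_div_cancel' (Nat.even_mul_succ_self t).two_dvd
  refine psdTh_eq_of_isGraphMetric isGraphMetric_pathGraph (fun v x => decide (x < v))
    isBranchLabeling_pathGraph t ?_ fun B p hB => ?_
  · obtain ⟨B, hcard, hB⟩ := exists_covers_pathGraph (n := t * (t + 1) / 2)
      (b := (t + 1) / 2) (p := t / 2) (by have := triangular_le_mul t; omega)
    exact ⟨B, t / 2, hB, by omega⟩
  · have := card_le_mul_of_covers_pathGraph hB
    exact le_add_of_triangular_le_mul (by omega)

end PathGraph

theorem stmt13 (t : ℕ) (ht : 4 ≤ t) :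
    psdTh (spider (t - 1) (fun i => t - (i : ℕ))) = t + 1 ∧
    t + 1 = 1 + psdTh (SimpleGraph.pathGraph (t * (t + 1) / 2)) :=
  ⟨psdTh_staircase ht, by rw [psdTh_pathGraph_triangular]; omega⟩
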